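/- For any measurable m : Ω → [0,1] with ‖m‖₁ > 0, every volume v of a Dice-optimal segmentation satisfies v ≥ ‖m‖₁², i.e., the set of maximizing volumes of d_m(v) = 2∫₀^v (1 - F_m⁻¹(u)) du / (‖m‖₁ + v) is contained in [‖m‖₁², 1]. -/

import Mathlib

open MeasureTheory Set

noncomputable section

/-- Normalized Lebesgue measure on the unit cube `[0,1]^n`. -/
def cubeMeasure (n : ℕ) : Measure (Fin n → ℝ) :=
  volume.restrict (Set.univ.pi fun _ => Set.Icc (0:ℝ) 1)

/-- A segmentation: a measurable `{0,1}`-valued function on the cube. -/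
def IsSeg {n : ℕ} (s : (Fin n → ℝ) → ℝ) : Prop :=
  Measurable s ∧ ∀ ω, s ω = 0 ∨ s ω = 1

/-- A marginal function: a measurable `[0,1]`-valued function on the cube. -/
def IsMarg {n : ℕ} (m : (Fin n → ℝ) → ℝ) : Prop :=
  Measurable m ∧ ∀ ω, m ω ∈ Set.Icc (0:ℝ) 1

/-- The volume `‖f‖₁ = ∫ f dλ` (for nonnegative `f`). -/
def vol {n : ℕ} (f : (Fin n → ℝ) → ℝ) : ℝ := ∫ ω, f ω ∂(cubeMeasure n)

/-- `F_m(t) = λ({ω : 1 - m(ω) ≤ t})`. -/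
def Fcdf {n : ℕ} (m : (Fin n → ℝ) → ℝ) (t : ℝ) : ℝ :=
  ((cubeMeasure n) {ω | 1 - m ω ≤ t}).toReal

/-- The left limit `F_m(t-) = λ({ω : 1 - m(ω) < t})`. -/
def FcdfMinus {n : ℕ} (m : (Fin n → ℝ) → ℝ) (t : ℝ) : ℝ :=
  ((cubeMeasure n) {ω | 1 - m ω < t}).toReal

/-- The generalized inverse (quantile function) `F_m⁻¹(v) = inf{t ∈ [0,1] : F_m(t) ≥ v}`. -/
def Finv {n : ℕ} (m : (Fin n → ℝ) → ℝ) (v : ℝ) : ℝ :=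
  sInf {t | t ∈ Set.Icc (0:ℝ) 1 ∧ v ≤ Fcdf m t}

/-- The function `d_m`. -/
def dFun {n : ℕ} (m : (Fin n → ℝ) → ℝ) (v : ℝ) : ℝ :=
  2 * (∫ u in (0:ℝ)..v, (1 - Finv m u)) / (vol m + v)


/-!
Since the integrand `1 - F_m⁻¹` lies in `[0,1]`, `d_m(v) ≤ 2v / (‖m‖₁ + v)`. On the other hand
`∫₀¹ F_m⁻¹ ≤ ∫ (1 - m) dλ`, by the layer-cake formula and the inclusion
`{u ∈ (0,1] : t < F_m⁻¹(u)} ⊆ (F_m(t), 1]`, so `d_m(1) ≥ 2‖m‖₁ / (‖m‖₁ + 1)`.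
At a maximizer `v` we get `d_m(1) ≤ d_m(v)`, which rearranges to `‖m‖₁² ≤ v`.
-/

theorem integral_le_integral_of_measure_lt_le {α β : Type*} [MeasurableSpace α]
    [MeasurableSpace β] {μ : Measure α} {ν : Measure β} {f : α → ℝ} {g : β → ℝ}
    (hf0 : 0 ≤ᵐ[μ] f) (hf : AEMeasurable f μ) (hg0 : 0 ≤ᵐ[ν] g) (hg : Integrable g ν)
    (h : ∀ t > 0, μ {a | t < f a} ≤ ν {b | t < g b}) :
    ∫ a, f a ∂μ ≤ ∫ b, g b ∂ν := by
  rw [integral_eq_lintegral_of_nonneg_ae hf0 hf.aestronglyMeasurable,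
    integral_eq_lintegral_of_nonneg_ae hg0 hg.aestronglyMeasurable]
  refine ENNReal.toReal_mono hg.lintegral_lt_top.ne ?_
  rw [lintegral_eq_lintegral_meas_lt μ hf0 hf,
    lintegral_eq_lintegral_meas_lt ν hg0 hg.aemeasurable]
  exact setLIntegral_mono' measurableSet_Ioi h

instance (n : ℕ) : IsProbabilityMeasure (cubeMeasure n) := by
  constructor
  rw [cubeMeasure, Measure.restrict_apply_univ, volume_pi_pi]
  simp

section Quantile

variable {n : ℕ} {m : (Fin n → ℝ) → ℝ}

theorem IsMarg.integrable (hm : IsMarg m) : Integrable m (cubeMeasure n) :=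
  Integrable.of_bound hm.1.aestronglyMeasurable 1 <| ae_of_all _ fun ω => by
    rw [Real.norm_eq_abs, abs_le]
    exact ⟨by linarith [(hm.2 ω).1], (hm.2 ω).2⟩

theorem IsMarg.nonneg (hm : IsMarg m) : 0 ≤ m := fun ω => (hm.2 ω).1

theorem vol_nonneg (hm : 0 ≤ m) : 0 ≤ vol m :=
  integral_nonneg hm

theorem Fcdf_one (hm : 0 ≤ m) : Fcdf m 1 = 1 := by
  have : {ω | 1 - m ω ≤ (1 : ℝ)} = univ :=
    eq_univ_of_forall fun ω => by simpa using hm ω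
  rw [Fcdf, this]
  simp

theorem Finv_nonneg (u : ℝ) : 0 ≤ Finv m u :=
  Real.sInf_nonneg fun _ ht => ht.1.1

theorem Finv_le_of_le_Fcdf {s u : ℝ} (hs : s ∈ Icc (0 : ℝ) 1) (h : u ≤ Fcdf m s) :
    Finv m u ≤ s :=
  csInf_le ⟨0, fun _ ht => ht.1.1⟩ ⟨hs, h⟩

theorem Fcdf_lt_of_lt_Finv {t u : ℝ} (ht : t ∈ Icc (0 : ℝ) 1) (h : t < Finv m u) :
    Fcdf m t < u :=
  lt_of_not_ge fun hu => (Finv_le_of_le_Fcdf ht hu).not_gt h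

theorem Finv_le_one (hm : 0 ≤ m) {u : ℝ} (hu : u ≤ 1) : Finv m u ≤ 1 :=
  Finv_le_of_le_Fcdf ⟨zero_le_one, le_rfl⟩ (by rwa [Fcdf_one hm])

theorem Finv_monotoneOn (hm : 0 ≤ m) : MonotoneOn (Finv m) (Iic 1) := fun _ _ _ hu' huu' =>
  csInf_le_csInf ⟨0, fun _ ht => ht.1.1⟩ ⟨1, ⟨zero_le_one, le_rfl⟩, by rwa [Fcdf_one hm]⟩
    fun _ ht => ⟨ht.1, huu'.trans ht.2⟩

theorem measure_lt_Finv_le (hmeas : Measurable m) (hm : 0 ≤ m) {t : ℝ} (ht : 0 ≤ t) :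
    volume.restrict (Ioc 0 1) {u | t < Finv m u} ≤ cubeMeasure n {ω | t < 1 - m ω} := by
  have hsub : {u | t < Finv m u} ∩ Ioc 0 1 ⊆ Ioc (Fcdf m t) 1 := by
    rintro u ⟨hu, -, hu1⟩
    exact ⟨Fcdf_lt_of_lt_Finv ⟨ht, (hu.trans_le (Finv_le_one hm hu1)).le⟩ hu, hu1⟩
  have hcompl : {ω | t < 1 - m ω} = {ω | 1 - m ω ≤ t}ᶜ := by
    ext; simp only [mem_ofPred_eq, mem_compl_iff, not_le]
  rw [Measure.restrict_apply' measurableSet_Ioc]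
  calc volume ({u | t < Finv m u} ∩ Ioc 0 1)
      ≤ volume (Ioc (Fcdf m t) 1) := measure_mono hsub
    _ = 1 - ENNReal.ofReal (Fcdf m t) := by
      rw [Real.volume_Ioc, ENNReal.ofReal_sub 1 (show 0 ≤ Fcdf m t from ENNReal.toReal_nonneg),
        ENNReal.ofReal_one]
    _ = cubeMeasure n {ω | t < 1 - m ω} := by
      rw [hcompl, prob_compl_eq_one_sub (measurableSet_le (by fun_prop) measurable_const), Fcdf,
        ENNReal.ofReal_toReal (measure_ne_top _ _)]

theorem integral_Finv_le (hm : IsMarg m) :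
    ∫ u in (0 : ℝ)..1, Finv m u ≤ ∫ ω, (1 - m ω) ∂(cubeMeasure n) := by
  rw [intervalIntegral.integral_of_le zero_le_one]
  exact integral_le_integral_of_measure_lt_le (ae_of_all _ Finv_nonneg)
    (aemeasurable_restrict_of_monotoneOn measurableSet_Ioc
      ((Finv_monotoneOn hm.nonneg).mono fun _ hu => hu.2))
    (ae_of_all _ fun ω => sub_nonneg.2 (hm.2 ω).2) ((integrable_const 1).sub hm.integrable)
    fun t ht => measure_lt_Finv_le hm.1 hm.nonneg ht.le

theorem vol_le_integral_one_sub_Finv (hm : IsMarg m) :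
    vol m ≤ ∫ u in (0 : ℝ)..1, (1 - Finv m u) := by
  have hint : IntervalIntegrable (Finv m) volume 0 1 :=
    ((Finv_monotoneOn hm.nonneg).mono
      fun _ hu => hu.2.trans (max_le zero_le_one le_rfl)).intervalIntegrable
  have h := integral_Finv_le hm
  rw [integral_sub (integrable_const 1) hm.integrable] at h
  rw [intervalIntegral.integral_sub intervalIntegrable_const hint]
  simp only [integral_const, intervalIntegral.integral_const, smul_eq_mul, mul_one, sub_zero,
    probReal_univ] at h ⊢
  rw [vol]
  linarith

theorem integral_one_sub_Finv_le (hm : 0 ≤ m) {v : ℝ} (hv0 : 0 ≤ v) (hv1 : v ≤ 1) :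
    ∫ u in (0 : ℝ)..v, (1 - Finv m u) ≤ v := by
  have hbound : ∀ u ∈ uIoc 0 v, ‖1 - Finv m u‖ ≤ 1 := by
    rintro u ⟨-, hu⟩
    rw [Real.norm_eq_abs, abs_le]
    have hu1 := Finv_le_one hm (hu.trans (max_le zero_le_one hv1))
    constructor <;> linarith [Finv_nonneg (m := m) u]
  calc ∫ u in (0 : ℝ)..v, (1 - Finv m u)
      ≤ ‖∫ u in (0 : ℝ)..v, (1 - Finv m u)‖ := Real.le_norm_self _
    _ ≤ 1 * |v - 0| := intervalIntegral.norm_integral_le_of_norm_le_const hbound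
    _ = v := by rw [one_mul, sub_zero, abs_of_nonneg hv0]

theorem dFun_le (hm : 0 ≤ m) {v : ℝ} (hv0 : 0 ≤ v) (hv1 : v ≤ 1) :
    dFun m v ≤ 2 * v / (vol m + v) :=
  div_le_div_of_nonneg_right (by linarith [integral_one_sub_Finv_le hm hv0 hv1])
    (add_nonneg (vol_nonneg hm) hv0)

theorem le_dFun_one (hm : IsMarg m) : 2 * vol m / (vol m + 1) ≤ dFun m 1 :=
  div_le_div_of_nonneg_right (by linarith [vol_le_integral_one_sub_Finv hm])
    (by linarith [vol_nonneg hm.nonneg])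

end Quantile

theorem stmt9 {n : ℕ} {m : (Fin n → ℝ) → ℝ} (hm : IsMarg m) (h0 : 0 < vol m) :
    {v ∈ Set.Icc (0:ℝ) 1 | ∀ w ∈ Set.Icc (0:ℝ) 1, dFun m w ≤ dFun m v} ⊆
      Set.Icc ((vol m) ^ 2) 1 := by
  rintro v ⟨⟨hv0, hv1⟩, hmax⟩
  have h := (le_dFun_one hm).trans
    ((hmax 1 ⟨zero_le_one, le_rfl⟩).trans (dFun_le hm.nonneg hv0 hv1))
  rw [div_le_div_iff₀ (by linarith) (by linarith)] at h
  exact ⟨by nlinarith, hv1⟩
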